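/- The distribution of the step-down rejection number for i.i.d. p-values: if p₁,...,pₘ are i.i.d. with continuous increasing c.d.f. G and t is a nondecreasing threshold, then for 0 ≤ k ≤ m, P(|SD(t)| = k) = C(m,k)(1−G(t_{k+1}))^{m−k} Ψₖ(G(t₁),...,G(tₖ)), where Ψₖ is the joint c.d.f. of order statistics of k i.i.d. uniform variables (and the factor (1−G(t_{m+1}))⁰ is interpreted as 1 when k = m). -/

import Mathlib

open MeasureTheory Finset
open scoped Classical

noncomputable def unifM : Measure ℝ := volume.restrict (Set.Ioo (0:ℝ) 1)

noncomputable def iidUnif (k : ℕ) : Measure (Fin k → ℝ) := Measure.pi fun _ => unifM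

/-- `Psi k t` is the probability that the order statistics `U_(1) ≤ ... ≤ U_(k)` of
`k` i.i.d. uniform variables on `(0,1)` satisfy `U_(j) ≤ t j` for all `1 ≤ j ≤ k`
(1-indexed thresholds), expressed via the counting characterization
`U_(j) ≤ s ↔ #{i : U i ≤ s} ≥ j`. By convention `Psi 0 t = 1`. -/
noncomputable def Psi (k : ℕ) (t : ℕ → ℝ) : ℝ :=
  (iidUnif k {x | ∀ j ∈ Finset.Icc 1 k,
    j ≤ (Finset.univ.filter (fun i : Fin k => x i ≤ t j)).card}).toReal

/-- Rejection number of the step-up procedure with threshold `t` (1-indexed, `t 0 = 0`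
by convention) applied to the `p`-values `p : Fin m → ℝ`:
the largest `k ≤ m` such that at least `k` of the `p`-values are `≤ t k`. -/
noncomputable def kSUf (m : ℕ) (t : ℕ → ℝ) (p : Fin m → ℝ) : ℕ :=
  Nat.findGreatest (fun k => k ≤ (Finset.univ.filter (fun i : Fin m => p i ≤ t k)).card) m

/-- The set of hypotheses rejected by the step-up procedure. -/
noncomputable def rejSUf (m : ℕ) (t : ℕ → ℝ) (p : Fin m → ℝ) : Finset (Fin m) :=
  Finset.univ.filter (fun i => p i ≤ t (kSUf m t p))

/-- Rejection number of the step-down procedure with threshold `t` applied to `p`: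
the largest `k ≤ m` such that for all `k' ≤ k` at least `k'` of the `p`-values are `≤ t k'`. -/
noncomputable def kSDf (m : ℕ) (t : ℕ → ℝ) (p : Fin m → ℝ) : ℕ :=
  Nat.findGreatest
    (fun k => ∀ k' ∈ Finset.Icc 1 k,
      k' ≤ (Finset.univ.filter (fun i : Fin m => p i ≤ t k')).card) m

/-- The set of hypotheses rejected by the step-down procedure. -/
noncomputable def rejSDf (m : ℕ) (t : ℕ → ℝ) (p : Fin m → ℝ) : Finset (Fin m) :=
  Finset.univ.filter (fun i => p i ≤ t (kSDf m t p))

/-!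
Split the event `kSDf = k` according to the set `S` of the `k` smallest `p`-values: on the cell
of `S`, the coordinates in `S` pass the first `k` steps among themselves and the other `m - k`
exceed `t (k + 1)`. For different `S` these cells are disjoint (the coordinates in `S` lie below
`t k ≤ t (k + 1)`), and by independence each has probability
`μ^k (first k steps pass) * (1 - G (t (k + 1))) ^ (m - k)`. Since `G` pushes `μ` forward to the
uniform law on `(0, 1)` and is strictly increasing on the support `[0, 1]`, the first factor
is `Ψ_k (G (t 1), …, G (t k))`. Almost surely every `p`-value is positive, so `|SD(t)|` equals
`kSDf` even when no step passes and the threshold `t 0 = 0` is used.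
-/

open Topology

section StepDown

variable {ι : Type*} [Fintype ι]

-- The first `k` order statistics of `x` satisfy `x₍ⱼ₎ ≤ t j`: the step-down procedure passes
-- its first `k` steps.
def stepDownPass (k : ℕ) (t : ℕ → ℝ) : Set (ι → ℝ) :=
  {x | ∀ j ∈ Icc 1 k, j ≤ #{i | x i ≤ t j}}

lemma Psi_eq_toReal_iidUnif (k : ℕ) (t : ℕ → ℝ) :
    Psi k t = (iidUnif k (stepDownPass k t)).toReal :=
  rfl

lemma measurableSet_stepDownPass (k : ℕ) (t : ℕ → ℝ) :
    MeasurableSet (stepDownPass (ι := ι) k t) := by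
  have hcount (c : ℝ) : Measurable fun x : ι → ℝ => #{i | x i ≤ c} := by
    simp_rw [card_filter]
    exact Finset.measurable_sum _ fun i _ =>
      Measurable.ite (measurableSet_le (measurable_pi_apply i) measurable_const)
        measurable_const measurable_const
  simp only [stepDownPass, Set.ofPred_forall]
  exact .iInter fun j => .iInter fun _ => hcount (t j) (measurableSet_Ici (a := j))

lemma stepDownPass_zero (t : ℕ → ℝ) : stepDownPass (ι := ι) 0 t = Set.univ := by
  simp [stepDownPass]

lemma stepDownPass_antitone (t : ℕ → ℝ) : Antitone fun k => stepDownPass (ι := ι) k t :=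
  fun _ _ hkn _ hx j hj => hx j (Icc_subset_Icc_right hkn hj)

lemma stepDownPass_succ {k : ℕ} {t : ℕ → ℝ} {x : ι → ℝ} :
    x ∈ stepDownPass (k + 1) t ↔ x ∈ stepDownPass k t ∧ k + 1 ≤ #{i | x i ≤ t (k + 1)} := by
  simp only [stepDownPass, Set.mem_ofPred_eq,
    ← insert_Icc_right_eq_Icc_add_one (Nat.le_add_left 1 k), forall_mem_insert]
  exact and_comm

lemma kSDf_eq_iff {m k : ℕ} (hkm : k ≤ m) {t : ℕ → ℝ} {x : Fin m → ℝ} :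
    kSDf m t x = k ↔ x ∈ stepDownPass k t ∧ (k < m → #{i | x i ≤ t (k + 1)} ≤ k) := by
  change Nat.findGreatest (fun n => x ∈ stepDownPass n t) m = k ↔ _
  rw [Nat.findGreatest_eq_iff]
  refine ⟨fun ⟨_, hk, hmax⟩ => ?_, fun ⟨hk, hnext⟩ => ⟨hkm, fun _ => hk, fun n hkn hnm hn => ?_⟩⟩
  · have hk : x ∈ stepDownPass k t := by
      rcases Nat.eq_zero_or_pos k with rfl | hpos
      · simp [stepDownPass_zero]
      · exact hk hpos.ne'
    refine ⟨hk, fun hlt => ?_⟩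
    have := hmax (lt_add_one k) hlt
    rw [stepDownPass_succ] at this
    exact Nat.le_of_lt_succ (not_le.1 fun h => this ⟨hk, h⟩)
  · have := (stepDownPass_succ.1 (stepDownPass_antitone t (Nat.succ_le_of_lt hkn) hn)).2
    exact Nat.not_succ_le_self k (this.trans (hnext (by omega)))

lemma kSDf_le (m : ℕ) (t : ℕ → ℝ) (x : Fin m → ℝ) : kSDf m t x ≤ m :=
  show Nat.findGreatest (fun n => x ∈ stepDownPass n t) m ≤ m from Nat.findGreatest_le m

lemma card_rejSDf {m : ℕ} {t : ℕ → ℝ} (ht : MonotoneOn t (Set.Icc 1 m)) {x : Fin m → ℝ}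
    (hx : ∀ i, t 0 < x i) : #(rejSDf m t x) = kSDf m t x := by
  obtain ⟨hpass, hnext⟩ := (kSDf_eq_iff (kSDf_le m t x)).1 rfl
  rcases Nat.eq_zero_or_pos (kSDf m t x) with hq | hq
  · simp [rejSDf, hq, filter_eq_empty_iff, hx]
  · refine le_antisymm ?_ (hpass _ (mem_Icc.2 ⟨hq, le_rfl⟩))
    rcases (kSDf_le m t x).lt_or_eq with hqm | hqm
    · refine (card_le_card fun i hi => ?_).trans (hnext hqm)
      simp only [rejSDf, mem_filter, mem_univ, true_and] at hi ⊢
      exact hi.trans (ht ⟨hq, hqm.le⟩ ⟨by omega, hqm⟩ (Nat.le_succ _))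
    · exact (card_filter_le _ _).trans_eq (by simp [hqm])

end StepDown

section Cells

lemma card_filter_univ_subtype {ι : Type*} (S : Finset ι) (p : ι → Prop) [DecidablePred p] :
    #{i : S | p i} = #(S.filter p) := by
  rw [univ_eq_attach, filter_attach, card_map, card_attach]

variable {ι : Type*}

def stepDownCell (S : Finset ι) (k : ℕ) (t : ℕ → ℝ) : Set (ι → ℝ) :=
  {x | (fun i : S => x i) ∈ stepDownPass k t ∧ ∀ i ∉ S, t (k + 1) < x i}

lemma le_of_mem_stepDownCell {S : Finset ι} {k : ℕ} {t : ℕ → ℝ} {x : ι → ℝ}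
    (hS : #S = k) (hx : x ∈ stepDownCell S k t) {i : ι} (hi : i ∈ S) : x i ≤ t k := by
  subst hS
  have hk : #S ≤ #{j : S | x j ≤ t #S} := hx.1 _ (mem_Icc.2 ⟨card_pos.2 ⟨i, hi⟩, le_rfl⟩)
  rw [card_filter_univ_subtype S (fun j => x j ≤ t #S)] at hk
  exact filter_eq_self.1 (eq_of_subset_of_card_le (filter_subset _ S) hk) i hi

lemma stepDownCell_eq_preimage (S : Finset ι) (k : ℕ) (t : ℕ → ℝ) :
    stepDownCell S k t = MeasurableEquiv.piEquivPiSubtypeProd (fun _ => ℝ) (· ∈ S) ⁻¹'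
      (stepDownPass k t ×ˢ Set.univ.pi fun _ => Set.Ioi (t (k + 1))) := by
  ext x
  simp [stepDownCell, MeasurableEquiv.piEquivPiSubtypeProd]

variable [Fintype ι]

lemma measurableSet_stepDownCell (S : Finset ι) (k : ℕ) (t : ℕ → ℝ) :
    MeasurableSet (stepDownCell S k t) := by
  rw [stepDownCell_eq_preimage]
  exact MeasurableEquiv.measurableSet_preimage _ |>.2 <|
    (measurableSet_stepDownPass k t).prod (.univ_pi fun _ => measurableSet_Ioi)

lemma pairwiseDisjoint_stepDownCell {k : ℕ} {t : ℕ → ℝ}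
    (ht : MonotoneOn t (Set.Icc 1 (Fintype.card ι))) :
    (powersetCard k (univ : Finset ι) : Set (Finset ι)).PairwiseDisjoint
      (stepDownCell · k t) := by
  intro S hS S' hS' hne
  rw [Function.onFun, Set.disjoint_left]
  intro x hx hx'
  rw [mem_coe, mem_powersetCard_univ] at hS hS'
  apply hne
  rcases (hS ▸ card_le_univ S : k ≤ Fintype.card ι).lt_or_eq with hk | hk
  · refine eq_of_subset_of_card_le (fun i hi => ?_) (hS.trans hS'.symm).ge
    have hk1 : 1 ≤ k := hS ▸ card_pos.2 ⟨i, hi⟩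
    by_contra hi'
    exact ((le_of_mem_stepDownCell hS hx hi).trans
      (ht ⟨hk1, hk.le⟩ ⟨by omega, hk⟩ (Nat.le_succ k))).not_gt (hx'.2 i hi')
  · rw [eq_univ_of_card S (hS.trans hk), eq_univ_of_card S' (hS'.trans hk)]

lemma setOf_stepDownPass_eq_biUnion {k : ℕ} (hk : k ≤ Fintype.card ι) {t : ℕ → ℝ}
    (ht : MonotoneOn t (Set.Icc 1 (Fintype.card ι))) :
    {x : ι → ℝ | x ∈ stepDownPass k t ∧ (k < Fintype.card ι → #{i | x i ≤ t (k + 1)} ≤ k)}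
      = ⋃ S ∈ powersetCard k univ, stepDownCell S k t := by
  ext x
  simp only [Set.mem_ofPred_eq, Set.mem_iUnion, mem_powersetCard_univ, exists_prop]
  constructor
  · rintro ⟨hpass, hnext⟩
    have hsmall : #{i | x i ≤ t (k + 1)} ≤ k := by
      rcases hk.lt_or_eq with hlt | heq
      · exact hnext hlt
      · exact (card_filter_le _ _).trans (card_univ.trans heq.symm).le
    obtain ⟨S, hsub, -, hS⟩ :=
      exists_subsuperset_card_eq (subset_univ _) hsmall (by simpa using hk)
    have hmemS : ∀ j ∈ Icc 1 k, ∀ i, x i ≤ t j → i ∈ S := by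
      intro j hj i hi
      rcases hk.lt_or_eq with hlt | heq
      · obtain ⟨hj1, hjk⟩ := mem_Icc.1 hj
        exact hsub (mem_filter.2 ⟨mem_univ i,
          hi.trans (ht ⟨hj1, hjk.trans hk⟩ ⟨by omega, hlt⟩ (by omega))⟩)
      · exact (eq_univ_of_card S (hS.trans heq)) ▸ mem_univ i
    refine ⟨S, hS, fun j hj => ?_, fun i hi => lt_of_not_ge fun h => hi (hsub ?_)⟩
    · rw [card_filter_univ_subtype S (fun i => x i ≤ t j)]
      exact (hpass j hj).trans (card_le_card fun i hi =>
        mem_filter.2 ⟨hmemS j hj i (mem_filter.1 hi).2, (mem_filter.1 hi).2⟩)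
    · exact mem_filter.2 ⟨mem_univ i, h⟩
  · rintro ⟨S, hS, hpassS, hgt⟩
    refine ⟨fun j hj => ?_, fun _ => ?_⟩
    · have := hpassS j hj
      rw [card_filter_univ_subtype S (fun i => x i ≤ t j)] at this
      exact this.trans (card_le_card (filter_subset_filter _ (subset_univ S)))
    · refine (card_le_card fun i hi => ?_).trans hS.le
      by_contra hiS
      exact (hgt i hiS).not_ge (mem_filter.1 hi).2

end Cells

section CellProbability

variable {ι : Type*} [Fintype ι] (μ : Measure ℝ) [SigmaFinite μ]

lemma pi_stepDownPass_congr {κ : Type*} [Fintype κ] (e : ι ≃ κ) (k : ℕ) (t : ℕ → ℝ) :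
    Measure.pi (fun _ : ι => μ) (stepDownPass k t)
      = Measure.pi (fun _ : κ => μ) (stepDownPass k t) := by
  have hmp := measurePreserving_piCongrLeft (fun _ : κ => μ) e
  rw [← hmp.measure_preimage (measurableSet_stepDownPass k t).nullMeasurableSet]
  congr 1
  ext x
  have hcount (c : ℝ) :
      #{b | MeasurableEquiv.piCongrLeft (fun _ => ℝ) e x b ≤ c} = #{a | x a ≤ c} :=
    (card_equiv e fun a => by simp [MeasurableEquiv.coe_piCongrLeft]).symm
  simp only [Set.mem_preimage, stepDownPass, Set.mem_ofPred_eq, hcount]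

lemma pi_stepDownCell {S : Finset ι} {k : ℕ} (hS : #S = k) (t : ℕ → ℝ) :
    Measure.pi (fun _ : ι => μ) (stepDownCell S k t)
      = Measure.pi (fun _ : Fin k => μ) (stepDownPass k t)
          * μ (Set.Ioi (t (k + 1))) ^ (Fintype.card ι - k) := by
  have hmp := measurePreserving_piEquivPiSubtypeProd (fun _ : ι => μ) (· ∈ S)
  rw [stepDownCell_eq_preimage, hmp.measure_preimage ((measurableSet_stepDownPass k t).prod
      (.univ_pi fun _ => measurableSet_Ioi)).nullMeasurableSet, Measure.prod_prod, Measure.pi_pi,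
    prod_const, card_univ, Fintype.card_subtype_compl, Fintype.card_coe, hS]
  congr 1
  convert pi_stepDownPass_congr μ (Fintype.equivFinOfCardEq (α := S) (by simpa using hS)) k t

end CellProbability

instance : IsProbabilityMeasure unifM :=
  ⟨by rw [unifM, Measure.restrict_apply_univ, Real.volume_Ioo]; norm_num⟩

lemma ae_forall_pi {ι α : Type*} [Fintype ι] [MeasurableSpace α] {μ : Measure α} [SigmaFinite μ]
    {p : α → Prop} (h : ∀ᵐ y ∂μ, p y) : ∀ᵐ x ∂Measure.pi (fun _ : ι => μ), ∀ i, p (x i) :=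
  Filter.eventually_all.2 fun _ => Measure.tendsto_eval_ae_ae.eventually h

section CDF

variable {μ : Measure ℝ} [IsProbabilityMeasure μ] {G : ℝ → ℝ}

lemma measure_Ioi_toReal (hG : ∀ s, G s = (μ (Set.Iic s)).toReal) (c : ℝ) :
    (μ (Set.Ioi c)).toReal = 1 - G c := by
  rw [← Set.compl_Iic, prob_compl_eq_one_sub measurableSet_Iic,
    ENNReal.toReal_sub_of_le prob_le_one ENNReal.one_ne_top, ENNReal.toReal_one, hG]

lemma measure_compl_Icc_zero_one (hsupp : μ (Set.Icc 0 1) = 1) : μ (Set.Icc (0 : ℝ) 1)ᶜ = 0 :=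
  (prob_compl_eq_zero_iff measurableSet_Icc).2 hsupp

lemma measure_Iic_zero (hsupp : μ (Set.Icc 0 1) = 1) (hG : ∀ s, G s = (μ (Set.Iic s)).toReal)
    (hGc : Continuous G) : μ (Set.Iic 0) = 0 := by
  have hIio : μ (Set.Iio 0) = 0 :=
    measure_mono_null (fun y (hy : y < 0) (hy' : y ∈ Set.Icc (0 : ℝ) 1) => hy.not_ge hy'.1)
      (measure_compl_Icc_zero_one hsupp)
  have hleft : Filter.Tendsto G (𝓝[<] 0) (𝓝 0) :=
    tendsto_const_nhds.congr' <| eventually_nhdsWithin_of_forall fun y hy => by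
      rw [hG, measure_mono_null (Set.Iic_subset_Iio.2 hy) hIio, ENNReal.toReal_zero]
  have hG0 : G 0 = 0 := tendsto_nhds_unique ((hGc.tendsto 0).mono_left nhdsWithin_le_nhds) hleft
  rw [hG] at hG0
  exact ((ENNReal.toReal_eq_zero_iff _).1 hG0).resolve_right (measure_ne_top _ _)

lemma measure_preimage_Iic (hsupp : μ (Set.Icc 0 1) = 1)
    (hG : ∀ s, G s = (μ (Set.Iic s)).toReal) (hGc : Continuous G)
    (hGm : StrictMonoOn G (Set.Icc 0 1)) {s : ℝ} (hs : s ∈ Set.Icc (0 : ℝ) 1) :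
    μ (G ⁻¹' Set.Iic s) = ENNReal.ofReal s := by
  have hG0 : G 0 = 0 := by simp [hG, measure_Iic_zero hsupp hG hGc]
  have hG1 : G 1 = 1 := by
    rw [hG, le_antisymm prob_le_one (hsupp ▸ measure_mono Set.Icc_subset_Iic_self),
      ENNReal.toReal_one]
  obtain ⟨c, hc, rfl⟩ := intermediate_value_Icc zero_le_one hGc.continuousOn (hG0 ▸ hG1 ▸ hs)
  have hnull := measure_compl_Icc_zero_one hsupp
  have hset : G ⁻¹' Set.Iic (G c) ∩ Set.Icc 0 1 = Set.Iic c ∩ Set.Icc 0 1 := by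
    ext y
    simp only [Set.mem_inter_iff, Set.mem_preimage, Set.mem_Iic]
    exact and_congr_left fun hy => hGm.le_iff_le hy hc
  rw [← measure_inter_conull hnull, hset, measure_inter_conull hnull, hG,
    ENNReal.ofReal_toReal (measure_ne_top _ _)]

lemma map_eq_unifM (hsupp : μ (Set.Icc 0 1) = 1)
    (hG : ∀ s, G s = (μ (Set.Iic s)).toReal) (hGc : Continuous G)
    (hGm : StrictMonoOn G (Set.Icc 0 1)) : μ.map G = unifM := by
  have : IsProbabilityMeasure (μ.map G) := Measure.isProbabilityMeasure_map hGc.aemeasurable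
  refine Measure.ext_of_Iic _ _ fun s => ?_
  have hunif : unifM (Set.Iic s) = ENNReal.ofReal (min 1 s) := by
    rw [unifM, Measure.restrict_congr_set Ioo_ae_eq_Ioc, Measure.restrict_apply measurableSet_Iic,
      Set.inter_comm, Set.Ioc_inter_Iic, Real.volume_Ioc, sub_zero]
  rw [Measure.map_apply hGc.measurable measurableSet_Iic, hunif]
  rcases lt_or_ge s 0 with hs0 | hs0
  · have hempty : G ⁻¹' Set.Iic s = ∅ := Set.eq_empty_of_forall_notMem fun y hy =>
      (hG y ▸ ENNReal.toReal_nonneg).not_gt (lt_of_le_of_lt hy hs0)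
    rw [hempty, measure_empty, ENNReal.ofReal_eq_zero.2 ((min_le_right _ _).trans hs0.le)]
  rcases le_or_gt s 1 with hs1 | hs1
  · rw [measure_preimage_Iic hsupp hG hGc hGm ⟨hs0, hs1⟩, min_eq_right hs1]
  · have huniv : G ⁻¹' Set.Iic s = Set.univ :=
      Set.eq_univ_of_forall fun y => show G y ≤ s by
        rw [hG]
        exact measureReal_le_one.trans hs1.le
    rw [huniv, measure_univ, min_eq_left hs1.le, ENNReal.ofReal_one]

lemma pi_stepDownPass_eq_iidUnif (hsupp : μ (Set.Icc 0 1) = 1) (hG : ∀ s, G s = (μ (Set.Iic s)).toReal)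
    (hGc : Continuous G) (hGm : StrictMonoOn G (Set.Icc 0 1)) {k : ℕ} {u : ℕ → ℝ}
    (hu : ∀ j ∈ Icc 1 k, u j ∈ Set.Icc (0 : ℝ) 1) :
    Measure.pi (fun _ : Fin k => μ) (stepDownPass k u)
      = iidUnif k (stepDownPass k fun j => G (u j)) := by
  have hmp : MeasurePreserving (fun (y : Fin k → ℝ) i => G (y i))
      (Measure.pi fun _ => μ) (iidUnif k) :=
    measurePreserving_pi _ _ fun _ => ⟨hGc.measurable, map_eq_unifM hsupp hG hGc hGm⟩
  rw [← hmp.measure_preimage (measurableSet_stepDownPass k _).nullMeasurableSet]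
  refine measure_congr ((ae_forall_pi (measure_compl_Icc_zero_one hsupp)).mono fun y hy => ?_)
  refine propext (forall₂_congr fun j hj => ?_)
  rw [filter_congr fun i _ => hGm.le_iff_le (hy i) (hu j hj)]

end CDF

/-- Distribution of the step-down rejection number for i.i.d. p-values with continuous
increasing c.d.f. `G`: `P(|SD(t)| = k) = C(m,k)(1-G(t_{k+1}))^{m-k} Ψ_k(G(t₁),...,G(t_k))`. -/
theorem stepdown_rejection_distribution (m : ℕ)
    (μG : Measure ℝ) [IsProbabilityMeasure μG] (hsupp : μG (Set.Icc 0 1) = 1)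
    (G : ℝ → ℝ) (hG : ∀ s, G s = (μG (Set.Iic s)).toReal)
    (hGc : Continuous G) (hGm : StrictMonoOn G (Set.Icc 0 1))
    (t : ℕ → ℝ) (ht0 : t 0 = 0) (ht : MonotoneOn t (Set.Icc 1 m))
    (ht01 : ∀ j ∈ Set.Icc 1 m, t j ∈ Set.Icc (0:ℝ) 1)
    (k : ℕ) (hkm : k ≤ m) :
    ((Measure.pi fun _ : Fin m => μG) {x | (rejSDf m t x).card = k}).toReal
      = (m.choose k : ℝ) * (1 - G (t (k + 1))) ^ (m - k)
          * Psi k (fun j => G (t j)) := by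
  have hpos : ∀ᵐ x ∂Measure.pi (fun _ : Fin m => μG), ∀ i, t 0 < x i := by
    refine ae_forall_pi (mem_ae_iff.2 ?_)
    change μG (Set.Ioi (t 0))ᶜ = 0
    rw [ht0, Set.compl_Ioi, measure_Iic_zero hsupp hG hGc]
  have hcard : {x : Fin m → ℝ | #(rejSDf m t x) = k}
      =ᵐ[Measure.pi fun _ => μG] {x | kSDf m t x = k} :=
    hpos.mono fun x hx => show (#(rejSDf m t x) = k) = (kSDf m t x = k) by rw [card_rejSDf ht hx]
  have hcells : {x : Fin m → ℝ | kSDf m t x = k}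
      = ⋃ S ∈ powersetCard k univ, stepDownCell S k t := by
    rw [← setOf_stepDownPass_eq_biUnion (by simpa) (by simpa)]
    ext x
    simpa using kSDf_eq_iff hkm
  rw [measure_congr hcard, hcells,
    measure_biUnion_finset (pairwiseDisjoint_stepDownCell (by simpa))
      fun S _ => measurableSet_stepDownCell S k t,
    sum_congr rfl fun S hS => pi_stepDownCell μG (mem_powersetCard_univ.1 hS) t,
    sum_const, card_powersetCard, card_univ, Fintype.card_fin,
    pi_stepDownPass_eq_iidUnif hsupp hG hGc hGm fun j hj =>
      ht01 j ⟨(mem_Icc.1 hj).1, (mem_Icc.1 hj).2.trans hkm⟩,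
    nsmul_eq_mul, ENNReal.toReal_mul, ENNReal.toReal_mul, ENNReal.toReal_pow,
    ENNReal.toReal_natCast, measure_Ioi_toReal hG, Psi_eq_toReal_iidUnif]
  ring
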